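/- arXiv:1909.02475 — 5 statements merged into one kernel-verified Lean document; each statement's English description precedes it below -/
import Mathlib

section
/- The improper integral ∫₀^∞ wᵀ A e^{As} e_1 (1 − e^{−2λ_r s}) ds converges and equals 1 − wᵀ A (2λ_r I − A)^{−1} e_1. -/
/-!
Put `p(s) = e^{sA} e₁`, so `p' = A p`. The matrix `A` is lower triangular, and every diagonal
entry except the last (absorbing) one is at most `-λ_c`; variation of constants, coordinate by
coordinate, makes all coordinates of `p` but the last one `O(e^{-λ_c s / 2})`. The columns of `A`
sum to zero, so `∑ₖ pₖ = 1` and hence `p(s) → e_N`. With `R = (2λ_r I - A)⁻¹`, the function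
`G(s) = wᵀ p(s) + e^{-2λ_r s} wᵀ A R p(s)` is an antiderivative of the integrand, and the integral
is `G(∞) - G(0) = w_N - wᵀ e₁ - wᵀ A R e₁ = 1 - wᵀ A R e₁`.
-/

open Matrix MeasureTheory Filter Topology Asymptotics Real

theorem hasDerivAt_exp_smul_mulVec {n : ℕ} (A : Matrix (Fin n) (Fin n) ℝ) (x : Fin n → ℝ)
    (s : ℝ) :
    HasDerivAt (fun t : ℝ => NormedSpace.exp (t • A) *ᵥ x)
      (A *ᵥ (NormedSpace.exp (s • A) *ᵥ x)) s := by
  let _ := Matrix.linftyOpNormedRing (n := Fin n) (α := ℝ)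
  let _ := Matrix.linftyOpNormedAlgebra (n := Fin n) (R := ℝ) (α := ℝ)
  let L : Matrix (Fin n) (Fin n) ℝ →L[ℝ] Fin n → ℝ :=
    ((LinearMap.applyₗ x).comp Matrix.toLin'.toLinearMap).toContinuousLinearMap
  rw [mulVec_mulVec]
  exact L.hasFDerivAt.comp_hasDerivAt s (hasDerivAt_exp_smul_const' A s)

theorem HasDerivAt.const_dotProduct {n : ℕ} {p : ℝ → Fin n → ℝ} {p' : Fin n → ℝ} {s : ℝ}
    (hp : HasDerivAt p p' s) (u : Fin n → ℝ) :
    HasDerivAt (fun t => u ⬝ᵥ p t) (u ⬝ᵥ p') s :=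
  HasDerivAt.fun_sum fun i _ => (hasDerivAt_pi.1 hp i).const_mul (u i)

theorem sum_apply_eq_of_hasDerivAt {n : ℕ} {A : Matrix (Fin n) (Fin n) ℝ}
    (hA : ∀ j, ∑ i, A i j = 0) {p : ℝ → Fin n → ℝ} (hp : ∀ t, HasDerivAt p (A *ᵥ p t) t)
    (t s : ℝ) : ∑ k, p t k = ∑ k, p s k := by
  have hderiv (t : ℝ) : HasDerivAt (fun t => 1 ⬝ᵥ p t) 0 t := by
    have h1A : 1 ᵥ* A = 0 := by
      ext j
      simp [vecMul, dotProduct, hA j]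
    simpa [dotProduct_mulVec, h1A] using (hp t).const_dotProduct 1
  simpa [one_dotProduct] using
    is_const_of_deriv_eq_zero (fun t => (hderiv t).differentiableAt) (fun t => (hderiv t).deriv) t s

theorem tendsto_exp_neg_mul_atTop_nhds_zero {b : ℝ} (hb : 0 < b) :
    Tendsto (fun t => exp (-b * t)) atTop (𝓝 0) :=
  tendsto_exp_atBot.comp (tendsto_id.const_mul_atTop_of_neg (neg_neg_iff_pos.2 hb))

theorem isBigO_exp_of_hasDerivAt {x g : ℝ → ℝ} {a μ : ℝ} (hμa : μ < a)
    (hx : ∀ t, HasDerivAt x (-a * x t + g t) t)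
    (hg : g =O[atTop] fun t => exp (-μ * t)) :
    x =O[atTop] fun t => exp (-μ * t) := by
  obtain ⟨C, hC⟩ := hg.bound
  obtain ⟨T, hT⟩ := eventually_atTop.1 hC
  -- Variation of constants: `y = e^{at} x` has derivative `e^{at} g = O(e^{(a - μ)t})`.
  set y : ℝ → ℝ := fun t => exp (a * t) * x t
  have hy (t : ℝ) : HasDerivAt y (exp (a * t) * g t) t :=
    (((hasDerivAt_id t).const_mul a).exp.mul (hx t)).congr_deriv (by simp; ring)
  set K := max (|y T| * exp (-((a - μ) * T))) (C / (a - μ))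
  have hB (t : ℝ) : HasDerivAt (fun t => K * exp ((a - μ) * t))
      (K * (exp ((a - μ) * t) * (a - μ))) t :=
    (((hasDerivAt_id t).const_mul (a - μ)).exp.const_mul K).congr_deriv (by simp)
  have hyB : ∀ t ≥ T, |y t| ≤ K * exp ((a - μ) * t) := by
    intro t ht
    refine image_norm_le_of_norm_deriv_right_le_deriv_boundary (a := T) (b := t)
      (fun s _ => (hy s).continuousAt.continuousWithinAt) (fun s _ => (hy s).hasDerivWithinAt)
      ?_ hB ?_ ⟨ht, le_rfl⟩
    · calc ‖y T‖ = |y T| * exp (-((a - μ) * T)) * exp ((a - μ) * T) := by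
            rw [mul_assoc, ← exp_add, neg_add_cancel, exp_zero, mul_one, Real.norm_eq_abs]
        _ ≤ K * exp ((a - μ) * T) := by gcongr; exact le_max_left _ _
    · intro s hs
      have hCK : C ≤ K * (a - μ) := (div_le_iff₀ (sub_pos.2 hμa)).1 (le_max_right _ _)
      calc ‖exp (a * s) * g s‖ = exp (a * s) * ‖g s‖ := by
            rw [norm_mul, Real.norm_of_nonneg (exp_pos _).le]
        _ ≤ exp (a * s) * (C * exp (-μ * s)) := by
            gcongr
            simpa [Real.norm_of_nonneg (exp_pos _).le] using hT s hs.1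
        _ = C * exp ((a - μ) * s) := by rw [mul_left_comm, ← exp_add]; ring_nf
        _ ≤ K * (exp ((a - μ) * s) * (a - μ)) := by nlinarith [exp_pos ((a - μ) * s)]
  refine IsBigO.of_bound K (eventually_atTop.2 ⟨T, fun t ht => ?_⟩)
  calc ‖x t‖ = exp (-(a * t)) * |y t| := by
        rw [abs_mul, abs_of_pos (exp_pos _), ← mul_assoc, ← exp_add, neg_add_cancel, exp_zero,
          one_mul, Real.norm_eq_abs]
    _ ≤ exp (-(a * t)) * (K * exp ((a - μ) * t)) := by gcongr; exact hyB t ht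
    _ = K * ‖exp (-μ * t)‖ := by
        rw [Real.norm_of_nonneg (exp_pos _).le, mul_left_comm, ← exp_add]; ring_nf

theorem isBigO_exp_of_isLowerTriangular {n : ℕ} {A : Matrix (Fin n) (Fin n) ℝ}
    (hA : A.IsLowerTriangular) {μ : ℝ} {l : Fin n} (hdiag : ∀ k < l, A k k < -μ)
    {x : ℝ → Fin n → ℝ} (hx : ∀ t, HasDerivAt x (A *ᵥ x t) t) (k : Fin n) (hk : k < l) :
    (fun t => x t k) =O[atTop] fun t => exp (-μ * t) := by
  induction k using WellFoundedLT.induction with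
  | _ k ih =>
  refine isBigO_exp_of_hasDerivAt (a := -A k k)
    (g := fun t => ∑ j ∈ Finset.univ.erase k, A k j * x t j)
    (by linarith [hdiag k hk]) (fun t => ?_) (IsBigO.fun_sum fun j hj => ?_)
  · refine (hasDerivAt_pi.1 (hx t) k).congr_deriv ?_
    rw [show (A *ᵥ x t) k = ∑ j, A k j * x t j from rfl,
      ← Finset.add_sum_erase _ _ (Finset.mem_univ k)]
    ring
  · rcases lt_or_gt_of_ne (Finset.ne_of_mem_erase hj) with hjk | hjk
    · exact (ih j hjk (hjk.trans hk)).const_mul_left _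
    · simpa [hA hjk] using isBigO_zero _ _

section Trajectory

variable {n : ℕ} {p : ℝ → Fin n → ℝ} {l : Fin n} {μ : ℝ}
  (hdecay : ∀ k ≠ l, (fun t => p t k) =O[atTop] fun t => exp (-μ * t))
include hdecay

theorem isBigO_dotProduct_of_apply_eq_zero {u : Fin n → ℝ} (hu : u l = 0) :
    (fun t => u ⬝ᵥ p t) =O[atTop] fun t => exp (-μ * t) :=
  IsBigO.fun_sum fun k _ => by
    rcases eq_or_ne k l with rfl | hk
    · simpa [hu] using isBigO_zero _ _
    · exact (hdecay k hk).const_mul_left (u k)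

theorem tendsto_dotProduct_of_sum_eq_one (hμ : 0 < μ) (hsum : ∀ t, ∑ k, p t k = 1)
    (u : Fin n → ℝ) : Tendsto (fun t => u ⬝ᵥ p t) atTop (𝓝 (u l)) := by
  have hsplit (t : ℝ) : u ⬝ᵥ p t = u l + (u - fun _ => u l) ⬝ᵥ p t := by
    have hconst : (fun _ => u l) ⬝ᵥ p t = u l := by
      simp only [dotProduct, ← Finset.mul_sum, hsum, mul_one]
    rw [sub_dotProduct, hconst]
    ring
  have hrest := (isBigO_dotProduct_of_apply_eq_zero hdecay (u := u - fun _ => u l)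
    (by simp)).trans_tendsto (tendsto_exp_neg_mul_atTop_nhds_zero hμ)
  rw [← add_zero (u l)]
  exact (hrest.const_add (u l)).congr fun t => (hsplit t).symm

end Trajectory

theorem hasDerivAt_add_exp_mul_resolvent {n : ℕ} {A : Matrix (Fin n) (Fin n) ℝ} {r : ℝ}
    (hR : IsUnit (r • 1 - A).det) (w : Fin n → ℝ) {p : ℝ → Fin n → ℝ} {s : ℝ}
    (hp : HasDerivAt p (A *ᵥ p s) s) :
    HasDerivAt (fun t => w ⬝ᵥ p t + exp (-r * t) * (w ⬝ᵥ (A *ᵥ ((r • 1 - A)⁻¹ *ᵥ p t))))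
      ((w ⬝ᵥ (A *ᵥ p s)) * (1 - exp (-r * s))) s := by
  set R := (r • 1 - A)⁻¹
  have hAR : A * R * A = r • (A * R) - A := by
    have h : A * R * (r • 1 - A) = A := by
      rw [Matrix.mul_assoc, nonsing_inv_mul _ hR, Matrix.mul_one]
    rw [Matrix.mul_sub, Matrix.mul_smul, Matrix.mul_one, sub_eq_iff_eq_add] at h
    rw [h]
    abel
  simp only [mulVec_mulVec, dotProduct_mulVec]
  refine ((hp.const_dotProduct _).add
    (((hasDerivAt_id s).const_mul (-r)).exp.mul (hp.const_dotProduct _))).congr_deriv ?_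
  simp only [dotProduct_mulVec, vecMul_vecMul, hAR, vecMul_sub, vecMul_smul, sub_dotProduct,
    smul_dotProduct, smul_eq_mul, id]
  ring

theorem integral_Ioi_dotProduct_mul_one_sub_exp {n : ℕ} {A : Matrix (Fin n) (Fin n) ℝ}
    {p : ℝ → Fin n → ℝ} {l : Fin n} {μ r : ℝ} (hμ : 0 < μ) (hr : 0 < r)
    (hR : IsUnit (r • 1 - A).det) (hAl : ∀ i, A i l = 0)
    (hp : ∀ t, HasDerivAt p (A *ᵥ p t) t)
    (hdecay : ∀ k ≠ l, (fun t => p t k) =O[atTop] fun t => exp (-μ * t))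
    (hsum : ∀ t, ∑ k, p t k = 1) (w : Fin n → ℝ) :
    IntegrableOn (fun s => (w ⬝ᵥ (A *ᵥ p s)) * (1 - exp (-r * s))) (Set.Ioi 0) ∧
    ∫ s in Set.Ioi 0, (w ⬝ᵥ (A *ᵥ p s)) * (1 - exp (-r * s))
      = w l - w ⬝ᵥ p 0 - w ⬝ᵥ (A *ᵥ ((r • 1 - A)⁻¹ *ᵥ p 0)) := by
  have hG (t : ℝ) := hasDerivAt_add_exp_mul_resolvent hR w (hp t)
  have hint : IntegrableOn (fun s => (w ⬝ᵥ (A *ᵥ p s)) * (1 - exp (-r * s))) (Set.Ioi 0) := by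
    have hpc : Continuous p := continuous_iff_continuousAt.2 fun t => (hp t).continuousAt
    refine integrable_of_isBigO_exp_neg hμ (Continuous.continuousOn (by fun_prop)) ?_
    have hwA : (w ᵥ* A) l = 0 := by simp [vecMul, dotProduct, hAl]
    have hbounded := ((tendsto_exp_neg_mul_atTop_nhds_zero hr).const_sub 1).isBigO_one ℝ
    simpa [dotProduct_mulVec] using
      (isBigO_dotProduct_of_apply_eq_zero hdecay hwA).mul hbounded
  have hlim : Tendsto (fun t => w ⬝ᵥ p t + exp (-r * t) * (w ⬝ᵥ (A *ᵥ ((r • 1 - A)⁻¹ *ᵥ p t))))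
      atTop (𝓝 (w l)) := by
    simp only [mulVec_mulVec, dotProduct_mulVec]
    simpa using (tendsto_dotProduct_of_sum_eq_one hdecay hμ hsum w).add
      ((tendsto_exp_neg_mul_atTop_nhds_zero hr).mul
        (tendsto_dotProduct_of_sum_eq_one hdecay hμ hsum _))
  refine ⟨hint, ?_⟩
  rw [integral_Ioi_of_hasDerivAt_of_tendsto (hG 0).continuousAt.continuousWithinAt
    (fun t _ => hG t) hint hlim]
  simp only [mul_zero, exp_zero, one_mul]
  ring

theorem isUnit_det_smul_one_sub_of_isLowerTriangular {n : ℕ} {A : Matrix (Fin n) (Fin n) ℝ}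
    (hA : A.IsLowerTriangular) {r : ℝ} (hdiag : ∀ k, A k k < r) :
    IsUnit (r • 1 - A).det := by
  have hT : (r • 1 - A).IsLowerTriangular := by
    rw [smul_one_eq_diagonal]
    exact (blockTriangular_diagonal _).sub hA
  rw [det_of_isLowerTriangular _ hT, isUnit_iff_ne_zero, Finset.prod_ne_zero_iff]
  intro k _
  simpa [sub_eq_zero] using (hdiag k).ne'

/-- Indexed from `0`: `infectionMatrix N lc i j` is the paper's `A_{i+1, j+1}`. -/
def infectionMatrix (N : ℕ) (lc : ℝ) : Matrix (Fin N) (Fin N) ℝ :=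
  Matrix.of fun i j =>
    if (i : ℕ) = (j : ℕ) then
      -((((i : ℕ) : ℝ) + 1) * ((N : ℝ) - (((i : ℕ) : ℝ) + 1)) * lc)
    else if (i : ℕ) = (j : ℕ) + 1 then
      (((j : ℕ) : ℝ) + 1) * ((N : ℝ) - (((j : ℕ) : ℝ) + 1)) * lc
    else 0

namespace infectionMatrix

variable {N : ℕ} {lc : ℝ}

theorem isLowerTriangular : (infectionMatrix N lc).IsLowerTriangular := by
  intro i j (hij : i < j)
  simp only [infectionMatrix, of_apply]
  rw [if_neg (by omega), if_neg (by omega)]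

theorem apply_self_le (hlc : 0 ≤ lc) (k : Fin N) (hk : (k : ℕ) + 1 < N) :
    infectionMatrix N lc k k ≤ -lc := by
  have hk' : ((k : ℕ) : ℝ) + 1 + 1 ≤ N := by exact_mod_cast hk
  have : (1 : ℝ) ≤ (((k : ℕ) : ℝ) + 1) * ((N : ℝ) - (((k : ℕ) : ℝ) + 1)) := by nlinarith
  rw [infectionMatrix, of_apply, if_pos rfl, neg_le_neg_iff]
  nlinarith

theorem apply_self_nonpos (hlc : 0 ≤ lc) (k : Fin N) : infectionMatrix N lc k k ≤ 0 := by
  have hk : ((k : ℕ) : ℝ) + 1 ≤ N := by exact_mod_cast k.isLt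
  rw [infectionMatrix, of_apply, if_pos rfl, Left.neg_nonpos_iff]
  have : (0 : ℝ) ≤ ((k : ℕ) : ℝ) + 1 := by positivity
  exact mul_nonneg (mul_nonneg this (by linarith)) hlc

theorem apply_of_val_add_one_eq (i l : Fin N) (hl : (l : ℕ) + 1 = N) :
    infectionMatrix N lc i l = 0 := by
  have := i.isLt
  simp only [infectionMatrix, of_apply]
  split_ifs with h₁ h₂
  · have hN : (N : ℝ) = ((i : ℕ) : ℝ) + 1 := by exact_mod_cast (by omega : N = i + 1)
    simp [hN]
  · omega
  · rfl

theorem sum_apply (j : Fin N) : ∑ i, infectionMatrix N lc i j = 0 := by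
  have hzero (i : Fin N) (h₁ : (i : ℕ) ≠ j) (h₂ : (i : ℕ) ≠ j + 1) :
      infectionMatrix N lc i j = 0 := by
    simp only [infectionMatrix, of_apply, if_neg h₁, if_neg h₂]
  rcases lt_or_ge ((j : ℕ) + 1) N with h | h
  · rw [Fintype.sum_eq_add j ⟨j + 1, h⟩ (by simp [Fin.ext_iff])
      fun i hi => hzero i (by simpa [Fin.ext_iff] using hi.1) (by simpa [Fin.ext_iff] using hi.2)]
    simp [infectionMatrix]
  · rw [Fintype.sum_eq_single j fun i hi => hzero i (by simpa [Fin.ext_iff] using hi) (by omega)]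
    exact apply_of_val_add_one_eq j j (by omega)

theorem isBigO_exp_apply (hlc : 0 < lc) {p : ℝ → Fin N → ℝ}
    (hp : ∀ t, HasDerivAt p (infectionMatrix N lc *ᵥ p t) t) (k : Fin N) (hk : (k : ℕ) + 1 < N) :
    (fun t => p t k) =O[atTop] fun t => exp (-(lc / 2) * t) := by
  refine isBigO_exp_of_isLowerTriangular isLowerTriangular (l := ⟨N - 1, by omega⟩)
    (fun j hj => ?_) hp k (Fin.lt_def.2 (by simp only; omega))
  have := apply_self_le hlc.le j (by rw [Fin.lt_def] at hj; simp only at hj; omega)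
  linarith

end infectionMatrix

/-- The scalar integral `∫₀^∞ wᵀ A e^{As} e₁ (1 - e^{-2λ_r s}) ds` converges and equals
`1 - wᵀ A (2λ_r I - A)⁻¹ e₁` (computational content of Theorem 3, Infection model). -/
theorem infection_bound_integral (N : ℕ) (hN : 2 ≤ N) (lc lr : ℝ)
    (hlc : 0 < lc) (hlr : 0 < lr)
    (A : Matrix (Fin N) (Fin N) ℝ)
    (hA : ∀ i j : Fin N, A i j =
      if (i : ℕ) = (j : ℕ) then
        -((((i : ℕ) : ℝ) + 1) * ((N : ℝ) - (((i : ℕ) : ℝ) + 1)) * lc)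
      else if (i : ℕ) = (j : ℕ) + 1 then
        (((j : ℕ) : ℝ) + 1) * ((N : ℝ) - (((j : ℕ) : ℝ) + 1)) * lc
      else 0)
    (w : Fin N → ℝ) (hw : ∀ k : Fin N, w k = ((k : ℕ) : ℝ) / ((N : ℝ) - 1))
    (e1 : Fin N → ℝ) (he1 : ∀ j : Fin N, e1 j = if (j : ℕ) = 0 then 1 else 0) :
    IntegrableOn
      (fun s : ℝ =>
        (w ⬝ᵥ (A *ᵥ (NormedSpace.exp (s • A) *ᵥ e1))) * (1 - Real.exp (-(2 * lr) * s)))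
      (Set.Ioi 0) ∧
    ∫ s in Set.Ioi (0 : ℝ),
        (w ⬝ᵥ (A *ᵥ (NormedSpace.exp (s • A) *ᵥ e1))) * (1 - Real.exp (-(2 * lr) * s))
      = 1 - w ⬝ᵥ (A *ᵥ ((((2 * lr) • (1 : Matrix (Fin N) (Fin N) ℝ) - A)⁻¹) *ᵥ e1)) := by
  obtain rfl : A = infectionMatrix N lc := Matrix.ext hA
  let last : Fin N := ⟨N - 1, by omega⟩
  have hlast : (last : ℕ) + 1 = N := by simp only [last]; omega
  have hp := hasDerivAt_exp_smul_mulVec (infectionMatrix N lc) e1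
  have hdecay (k : Fin N) (hk : k ≠ last) :=
    infectionMatrix.isBigO_exp_apply hlc hp k (by have := Fin.val_ne_of_ne hk; omega)
  have he1 : e1 = Pi.single ⟨0, by omega⟩ 1 := by
    ext j
    simp [he1, Pi.single_apply, Fin.ext_iff]
  have hsum (t : ℝ) : ∑ k, (NormedSpace.exp (t • infectionMatrix N lc) *ᵥ e1) k = 1 := by
    rw [sum_apply_eq_of_hasDerivAt infectionMatrix.sum_apply hp t 0]
    simp [he1, one_apply]
  have hR : IsUnit ((2 * lr) • 1 - infectionMatrix N lc).det :=
    isUnit_det_smul_one_sub_of_isLowerTriangular infectionMatrix.isLowerTriangular fun k =>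
      (infectionMatrix.apply_self_nonpos hlc.le k).trans_lt (by positivity)
  obtain ⟨hint, hval⟩ := integral_Ioi_dotProduct_mul_one_sub_exp (half_pos hlc) (by positivity) hR
    (fun i => infectionMatrix.apply_of_val_add_one_eq i last hlast) hp hdecay hsum w
  have hw_last : w last = 1 := by
    have hN' : (1 : ℝ) < N := by exact_mod_cast hN
    rw [hw, Nat.cast_sub (by omega), Nat.cast_one, div_self (by linarith)]
  have hw_e1 : w ⬝ᵥ e1 = 0 := by simp [he1, hw]
  refine ⟨hint, hval.trans ?_⟩
  rw [zero_smul, NormedSpace.exp_zero, one_mulVec, hw_last, hw_e1, sub_zero]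
end

section
/- The function s ↦ wᵀ e^{As} e_1 is nondecreasing on [0, ∞), takes the value 0 at s = 0, and satisfies 0 ≤ wᵀ e^{As} e_1 ≤ 1 for all s ≥ 0. -/
/-!
The matrix `A` is the generator, acting on column vectors, of the pure birth chain on
`{0, …, N - 1}` that jumps from `k` to `k + 1` at rate `(k + 1)(N - k - 1) λ_c`. Its off-diagonal
entries are nonnegative and its columns sum to zero, so `p(s) = e^{sA} e₁` is a probability vector
for `s ≥ 0`; as `0 ≤ w ≤ 1`, `F(s) = w ⬝ p(s)` lies in `[0, 1]`. Since `w` is increasing,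
`wᵀ A ≥ 0`, so `F'(s) = (wᵀ A) ⬝ p(s) ≥ 0`.
-/

open Matrix NormedSpace Set

namespace Matrix

variable {n : Type*} [Fintype n] [DecidableEq n]

section LinftyOpNorm

attribute [local instance] Matrix.linftyOpNormedRing Matrix.linftyOpNormedAlgebra

theorem exp_apply_nonneg {B : Matrix n n ℝ} (hB : ∀ i j, 0 ≤ B i j) (i j : n) :
    0 ≤ exp B i j :=
  (Pi.hasSum.1 (Pi.hasSum.1 (exp_series_hasSum_exp' (𝕂 := ℝ) B) i) j).nonneg fun k =>
    mul_nonneg (by positivity) (pow_apply_nonneg hB k i j)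

theorem hasDerivAt_dotProduct_exp_smul_mulVec (M : Matrix n n ℝ) (u v : n → ℝ) (s : ℝ) :
    HasDerivAt (fun t : ℝ => u ⬝ᵥ (exp (t • M) *ᵥ v)) ((u ᵥ* M) ⬝ᵥ (exp (s • M) *ᵥ v)) s := by
  let L : Matrix n n ℝ →ₗ[ℝ] ℝ :=
    { toFun := fun P => u ⬝ᵥ (P *ᵥ v)
      map_add' := fun P Q => by simp [add_mulVec, dotProduct_add]
      map_smul' := fun r P => by simp [smul_mulVec, dotProduct_smul] }
  have h : HasDerivAt (fun t : ℝ => L (exp (t • M))) (L (M * exp (s • M))) s :=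
    (LinearMap.toContinuousLinearMap L).hasFDerivAt.comp_hasDerivAt s
      (hasDerivAt_exp_smul_const' (𝕂 := ℝ) M s)
  rwa [show L (M * exp (s • M)) = (u ᵥ* M) ⬝ᵥ (exp (s • M) *ᵥ v) by
    rw [LinearMap.coe_mk, AddHom.coe_mk, ← mulVec_mulVec, dotProduct_mulVec]] at h

end LinftyOpNorm

/-- A matrix with nonnegative off-diagonal entries differs from a nonnegative one by a scalar. -/
theorem exp_apply_nonneg_of_offDiag {M : Matrix n n ℝ} (hM : ∀ i j, i ≠ j → 0 ≤ M i j)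
    (i j : n) : 0 ≤ exp M i j := by
  obtain ⟨c, hc⟩ := Finite.exists_le fun k => -M k k
  have hB : ∀ i j, 0 ≤ (M + diagonal fun _ => c : Matrix n n ℝ) i j := by
    intro i j
    rcases eq_or_ne i j with rfl | hij
    · simp only [add_apply, diagonal_apply_eq]
      linarith [hc i]
    · simpa [hij] using hM i j hij
  have hsplit : M = (M + diagonal fun _ => c) + diagonal fun _ => -c := by
    rw [add_assoc, diagonal_add]
    simp
  have hcomm : Commute (M + diagonal fun _ => c) (diagonal fun _ => -c) :=
    (scalar_commute (-c) (Commute.all _) _).symm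
  rw [hsplit, exp_add_of_commute _ _ hcomm, exp_diagonal, mul_diagonal, Pi.exp_def,
    ← Real.exp_eq_exp_ℝ]
  exact mul_nonneg (exp_apply_nonneg hB i j) (Real.exp_nonneg _)

theorem exp_smul_mulVec_nonneg {M : Matrix n n ℝ} (hM : ∀ i j, i ≠ j → 0 ≤ M i j) {v : n → ℝ}
    (hv : 0 ≤ v) {t : ℝ} (ht : 0 ≤ t) : 0 ≤ exp (t • M) *ᵥ v := fun i =>
  Finset.sum_nonneg fun j _ =>
    mul_nonneg (exp_apply_nonneg_of_offDiag (fun k l hkl => mul_nonneg ht (hM k l hkl)) i j) (hv j)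

theorem dotProduct_exp_smul_mulVec_of_vecMul_eq_zero {M : Matrix n n ℝ} {u : n → ℝ}
    (hu : u ᵥ* M = 0) (v : n → ℝ) (s : ℝ) : u ⬝ᵥ (exp (s • M) *ᵥ v) = u ⬝ᵥ v := by
  have hconst := is_const_of_deriv_eq_zero
    (fun t => (hasDerivAt_dotProduct_exp_smul_mulVec M u v t).differentiableAt)
    (fun t => by simp [(hasDerivAt_dotProduct_exp_smul_mulVec M u v t).deriv, hu]) s 0
  simpa using hconst

theorem monotoneOn_dotProduct_exp_smul_mulVec {M : Matrix n n ℝ}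
    (hM : ∀ i j, i ≠ j → 0 ≤ M i j) {u v : n → ℝ} (hu : 0 ≤ u ᵥ* M) (hv : 0 ≤ v) :
    MonotoneOn (fun t : ℝ => u ⬝ᵥ (exp (t • M) *ᵥ v)) (Ici 0) := by
  have hderiv := hasDerivAt_dotProduct_exp_smul_mulVec M u v
  refine monotoneOn_of_hasDerivWithinAt_nonneg (convex_Ici 0)
    (fun t _ => (hderiv t).continuousAt.continuousWithinAt)
    (fun t _ => (hderiv t).hasDerivWithinAt) fun t ht => ?_
  rw [interior_Ici] at ht
  exact dotProduct_nonneg_of_nonneg hu (exp_smul_mulVec_nonneg hM hv (le_of_lt ht))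

end Matrix

namespace Fin

variable {N : ℕ}

theorem val_le_sub_one (k : Fin N) : (k : ℝ) ≤ N - 1 := by
  rw [le_sub_iff_add_le]
  exact_mod_cast k.isLt

theorem val_div_sub_one_mem_Icc (k : Fin N) : (k : ℝ) / (N - 1) ∈ Icc 0 1 :=
  ⟨div_nonneg k.val.cast_nonneg (k.val.cast_nonneg.trans k.val_le_sub_one),
    div_le_one_of_le₀ k.val_le_sub_one (k.val.cast_nonneg.trans k.val_le_sub_one)⟩

theorem monotone_val_div_sub_one : Monotone fun k : Fin N => (k : ℝ) / (N - 1) :=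
  fun a b hab => div_le_div_of_nonneg_right (by exact_mod_cast hab)
    (a.val.cast_nonneg.trans a.val_le_sub_one)

theorem sum_ite_val_eq_succ {M : Type*} [AddCommMonoid M] (g : Fin N → M) (j : Fin N) :
    ∑ i : Fin N, (if (i : ℕ) = j + 1 then g i else 0) =
      if h : (j : ℕ) + 1 < N then g ⟨j + 1, h⟩ else 0 := by
  split_ifs with h
  · simp_rw [show ∀ i : Fin N, (i : ℕ) = j + 1 ↔ i = ⟨j + 1, h⟩ from
      fun i => Fin.ext_iff (b := ⟨j + 1, h⟩).symm, Finset.sum_ite_eq', Finset.mem_univ, if_true]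
  · exact Finset.sum_eq_zero fun i _ => if_neg (by omega)

end Fin

section PureBirth

variable {N : ℕ}

def pureBirthGenerator (r : Fin N → ℝ) : Matrix (Fin N) (Fin N) ℝ :=
  of fun i j => if (i : ℕ) = j then -r i else if (i : ℕ) = j + 1 then r j else 0

theorem vecMul_pureBirthGenerator_apply (r u : Fin N → ℝ) (j : Fin N) :
    (u ᵥ* pureBirthGenerator r) j =
      (if h : (j : ℕ) + 1 < N then u ⟨j + 1, h⟩ else 0) * r j - u j * r j := by
  have hsplit : ∀ i, u i * pureBirthGenerator r i j =
      (if (i : ℕ) = j + 1 then u i * r j else 0) - if i = j then u j * r j else 0 := by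
    intro i
    rcases eq_or_ne i j with rfl | hij
    · simp [pureBirthGenerator]
    · have hij' : (i : ℕ) ≠ j := Fin.val_ne_of_ne hij
      by_cases h : (i : ℕ) = j + 1 <;> simp [pureBirthGenerator, hij, hij', h]
  simp only [vecMul, dotProduct, hsplit, Finset.sum_sub_distrib, Fin.sum_ite_val_eq_succ,
    Finset.sum_ite_eq', Finset.mem_univ, if_true]
  split_ifs <;> simp

theorem pureBirthGenerator_apply_nonneg_of_ne {r : Fin N → ℝ} (hr : 0 ≤ r) {i j : Fin N}
    (hij : i ≠ j) : 0 ≤ pureBirthGenerator r i j := by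
  simp only [pureBirthGenerator, of_apply, if_neg (Fin.val_ne_of_ne hij)]
  split_ifs
  exacts [hr j, le_rfl]

theorem one_vecMul_pureBirthGenerator {r : Fin N → ℝ}
    (hlast : ∀ j : Fin N, (j : ℕ) + 1 = N → r j = 0) : 1 ᵥ* pureBirthGenerator r = 0 := by
  ext j
  rw [vecMul_pureBirthGenerator_apply]
  split_ifs with h
  · simp
  · simp [hlast j (by omega)]

theorem vecMul_pureBirthGenerator_nonneg {r : Fin N → ℝ} (hr : 0 ≤ r)
    (hlast : ∀ j : Fin N, (j : ℕ) + 1 = N → r j = 0) {u : Fin N → ℝ} (hu : Monotone u) :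
    0 ≤ u ᵥ* pureBirthGenerator r := by
  intro j
  rw [Pi.zero_apply, vecMul_pureBirthGenerator_apply]
  split_ifs with h
  · rw [← sub_mul]
    exact mul_nonneg (sub_nonneg.2 (hu (Fin.le_iff_val_le_val.2 (Nat.le_succ _)))) (hr j)
  · simp [hlast j (by omega)]

end PureBirth

/-- `F^{Inf}(s) = wᵀ e^{As} e₁` is a valid cdf: it is nondecreasing on `[0, ∞)`, equals `0`
at `s = 0`, and stays in `[0, 1]` for all `s ≥ 0` (Proposition 9, Infection model). -/
theorem infection_cdf_valid (N : ℕ) (hN : 2 ≤ N) (lc : ℝ) (hlc : 0 < lc)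
    (A : Matrix (Fin N) (Fin N) ℝ)
    (hA : ∀ i j : Fin N, A i j =
      if (i : ℕ) = (j : ℕ) then
        -((((i : ℕ) : ℝ) + 1) * ((N : ℝ) - (((i : ℕ) : ℝ) + 1)) * lc)
      else if (i : ℕ) = (j : ℕ) + 1 then
        (((j : ℕ) : ℝ) + 1) * ((N : ℝ) - (((j : ℕ) : ℝ) + 1)) * lc
      else 0)
    (w : Fin N → ℝ) (hw : ∀ k : Fin N, w k = ((k : ℕ) : ℝ) / ((N : ℝ) - 1))
    (e1 : Fin N → ℝ) (he1 : ∀ j : Fin N, e1 j = if (j : ℕ) = 0 then 1 else 0) :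
    MonotoneOn (fun s : ℝ => w ⬝ᵥ (NormedSpace.exp (s • A) *ᵥ e1)) (Set.Ici 0) ∧
    w ⬝ᵥ (NormedSpace.exp ((0 : ℝ) • A) *ᵥ e1) = 0 ∧
    ∀ s : ℝ, 0 ≤ s →
      0 ≤ w ⬝ᵥ (NormedSpace.exp (s • A) *ᵥ e1) ∧
      w ⬝ᵥ (NormedSpace.exp (s • A) *ᵥ e1) ≤ 1 := by
  set r : Fin N → ℝ := fun k => ((k : ℕ) + 1) * (N - ((k : ℕ) + 1)) * lc
  have hr : 0 ≤ r := fun k =>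
    mul_nonneg (mul_nonneg (by positivity) (sub_nonneg.2 (by exact_mod_cast k.isLt))) hlc.le
  have hlast : ∀ j : Fin N, (j : ℕ) + 1 = N → r j = 0 := fun j hj => by simp [r, ← hj]
  obtain rfl : A = pureBirthGenerator r := Matrix.ext hA
  obtain rfl : w = fun k : Fin N => (k : ℝ) / (N - 1) := funext hw
  have he1 : e1 = Pi.single ⟨0, by omega⟩ 1 := by
    ext j
    simp [he1, Pi.single_apply, Fin.ext_iff]
  have he1_nonneg : 0 ≤ e1 := he1 ▸ Pi.single_nonneg.2 zero_le_one
  have hA_offDiag := fun i j (hij : i ≠ j) => pureBirthGenerator_apply_nonneg_of_ne hr hij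
  have hp_nonneg := fun s (hs : 0 ≤ s) => exp_smul_mulVec_nonneg hA_offDiag he1_nonneg hs
  refine ⟨?_, ?_, fun s hs => ⟨?_, ?_⟩⟩
  · exact monotoneOn_dotProduct_exp_smul_mulVec hA_offDiag
      (vecMul_pureBirthGenerator_nonneg hr hlast Fin.monotone_val_div_sub_one) he1_nonneg
  · rw [zero_smul, exp_zero, one_mulVec, he1, dotProduct_single]
    simp
  · exact dotProduct_nonneg_of_nonneg (fun k => k.val_div_sub_one_mem_Icc.1) (hp_nonneg s hs)
  · calc _ ≤ 1 ⬝ᵥ (exp (s • pureBirthGenerator r) *ᵥ e1) :=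
          dotProduct_le_dotProduct_of_nonneg_right (fun k => k.val_div_sub_one_mem_Icc.2)
            (hp_nonneg s hs)
      _ = 1 := by
        rw [dotProduct_exp_smul_mulVec_of_vecMul_eq_zero (one_vecMul_pureBirthGenerator hlast),
          he1, dotProduct_single, Pi.one_apply, one_mul]
end

section
/- There holds wᵀ A (2λ_r I − A)^{−1} e_1 = (1 / (1 + (N−1)λ_c/(2λ_r))) · h(N, λ_c/λ_r), where h(N, L) = Σ_{k=2}^{N} ( (k−1)/(N−1) · ∏_{j=1}^{k−1} j(N−j)L / (2 + (j+1)(N−j−1)L) ). Equivalently, 1 − wᵀ A (2λ_r I − A)^{−1} e_1 = 1 − (1/(1 + ((N−1)/2)(λ_c/λ_r))) h(N, λ_c/λ_r). -/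
open Matrix

noncomputable def infC (N : ℕ) (lc : ℝ) (k : ℕ) : ℝ := (k : ℝ) * ((N : ℝ) - (k : ℝ)) * lc
noncomputable def infD (N : ℕ) (lc lr : ℝ) (k : ℕ) : ℝ := 2 * lr + infC N lc (k + 1)
noncomputable def infX (N : ℕ) (lc lr : ℝ) (i : ℕ) : ℝ :=
  (∏ m ∈ Finset.Icc 1 i, infC N lc m / infD N lc lr m) / infD N lc lr 0

lemma infD_pos {N : ℕ} {lc lr : ℝ} (hlc : 0 < lc) (hlr : 0 < lr) {k : ℕ} (hk : k + 1 ≤ N) :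
    0 < infD N lc lr k := by
  have h1 : ((k : ℝ) + 1) ≤ (N : ℝ) := by exact_mod_cast hk
  have h2 : (0:ℝ) ≤ (k : ℝ) + 1 := by positivity
  unfold infD infC
  push_cast
  nlinarith [mul_nonneg (mul_nonneg h2 (by linarith : (0:ℝ) ≤ (N:ℝ) - ((k:ℝ) + 1))) hlc.le]

lemma infX_succ (N : ℕ) (lc lr : ℝ) (i : ℕ) :
    infX N lc lr (i + 1) = infC N lc (i + 1) / infD N lc lr (i + 1) * infX N lc lr i := by
  unfold infX
  rw [Finset.prod_Icc_succ_top (by omega : 1 ≤ i + 1)]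
  ring

lemma infX_rec {N : ℕ} {lc lr : ℝ} (hlc : 0 < lc) (hlr : 0 < lr) {i : ℕ} (hi : i + 2 ≤ N) :
    infD N lc lr (i + 1) * infX N lc lr (i + 1) = infC N lc (i + 1) * infX N lc lr i := by
  have hd : infD N lc lr (i + 1) ≠ 0 := (infD_pos hlc hlr (by omega)).ne'
  rw [infX_succ]
  field_simp

lemma infKey {N : ℕ} {lc lr : ℝ} (hlc : 0 < lc) (hlr : 0 < lr) :
    ∀ n : ℕ, n + 1 ≤ N →
    ∑ i ∈ Finset.range (n + 1),
        (i : ℝ) * (infC N lc i * infX N lc lr (i - 1) - infC N lc (i + 1) * infX N lc lr i)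
      = 2 * lr * ∑ i ∈ Finset.range (n + 1), (i : ℝ) * infX N lc lr i := by
  intro n
  induction n with
  | zero => intro _; simp
  | succ n ih =>
    intro hn
    have hL := Finset.sum_range_succ
      (fun i => (i : ℝ) * (infC N lc i * infX N lc lr (i - 1) - infC N lc (i + 1) * infX N lc lr i))
      (n + 1)
    have hR := Finset.sum_range_succ (fun i => (i : ℝ) * infX N lc lr i) (n + 1)
    rw [hL, hR, ih (by omega)]
    have hrec := infX_rec hlc hlr (show n + 2 ≤ N by omega)
    have hd : infD N lc lr (n + 1) = 2 * lr + infC N lc (n + 2) := rfl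
    have key : infC N lc (n + 1) * infX N lc lr n - infC N lc (n + 2) * infX N lc lr (n + 1)
        = 2 * lr * infX N lc lr (n + 1) := by
      rw [hd] at hrec; linarith
    simp only [Nat.add_sub_cancel]
    rw [key]
    push_cast
    ring

/-- Corollary 1 (closed form of the Infection-model bound):
`wᵀ A (2λ_r I - A)⁻¹ e₁ = (1/(1 + (N-1)λ_c/(2λ_r))) · h(N, λ_c/λ_r)` with
`h(N, L) = Σ_{k=2}^{N} ((k-1)/(N-1) · ∏_{j=1}^{k-1} j(N-j)L / (2 + (j+1)(N-j-1)L))`. -/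
theorem infection_bound_closed_form (N : ℕ) (hN : 2 ≤ N) (lc lr : ℝ)
    (hlc : 0 < lc) (hlr : 0 < lr)
    (A : Matrix (Fin N) (Fin N) ℝ)
    (hA : ∀ i j : Fin N, A i j =
      if (i : ℕ) = (j : ℕ) then
        -((((i : ℕ) : ℝ) + 1) * ((N : ℝ) - (((i : ℕ) : ℝ) + 1)) * lc)
      else if (i : ℕ) = (j : ℕ) + 1 then
        (((j : ℕ) : ℝ) + 1) * ((N : ℝ) - (((j : ℕ) : ℝ) + 1)) * lc
      else 0)
    (w : Fin N → ℝ) (hw : ∀ k : Fin N, w k = ((k : ℕ) : ℝ) / ((N : ℝ) - 1))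
    (e1 : Fin N → ℝ) (he1 : ∀ j : Fin N, e1 j = if (j : ℕ) = 0 then 1 else 0)
    (h : ℕ → ℝ → ℝ)
    (hh : ∀ (M : ℕ) (L : ℝ), h M L =
      ∑ k ∈ Finset.Icc 2 M,
        (((k : ℝ) - 1) / ((M : ℝ) - 1) *
          ∏ j ∈ Finset.Icc 1 (k - 1),
            ((j : ℝ) * ((M : ℝ) - (j : ℝ)) * L) /
              (2 + ((j : ℝ) + 1) * ((M : ℝ) - (j : ℝ) - 1) * L))) :
    w ⬝ᵥ (A *ᵥ ((((2 * lr) • (1 : Matrix (Fin N) (Fin N) ℝ) - A)⁻¹) *ᵥ e1))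
      = (1 / (1 + ((N : ℝ) - 1) * lc / (2 * lr))) * h N (lc / lr) := by
  set B : Matrix (Fin N) (Fin N) ℝ := (2 * lr) • (1 : Matrix (Fin N) (Fin N) ℝ) - A with hB
  set xv : Fin N → ℝ := fun i => infX N lc lr (i : ℕ) with hxv
  -- entries of B
  have hBdiag : ∀ i : Fin N, B i i = infD N lc lr (i : ℕ) := by
    intro i
    simp only [hB, Matrix.sub_apply, Matrix.smul_apply, Matrix.one_apply_eq, hA i i, if_pos rfl,
      smul_eq_mul, mul_one]
    unfold infD infC
    push_cast
    ring
  have hBsub : ∀ i j : Fin N, (i : ℕ) = (j : ℕ) + 1 → B i j = -infC N lc (i : ℕ) := by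
    intro i j hij
    have hne : i ≠ j := by intro e; rw [e] at hij; omega
    have hne' : (i : ℕ) ≠ (j : ℕ) := by omega
    simp only [hB, Matrix.sub_apply, Matrix.smul_apply, Matrix.one_apply_ne hne, hA i j,
      if_neg hne', if_pos hij, smul_eq_mul, mul_zero, zero_sub]
    unfold infC
    rw [hij]
    push_cast
    ring
  have hBzero : ∀ i j : Fin N, (i : ℕ) ≠ (j : ℕ) → (i : ℕ) ≠ (j : ℕ) + 1 → B i j = 0 := by
    intro i j h1 h2
    have hne : i ≠ j := by intro e; rw [e] at h1; omega
    simp only [hB, Matrix.sub_apply, Matrix.smul_apply, Matrix.one_apply_ne hne, hA i j,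
      if_neg h1, if_neg h2, smul_eq_mul, mul_zero, sub_zero]
  have hd0 : infD N lc lr 0 ≠ 0 := (infD_pos hlc hlr (by omega)).ne'
  -- B *ᵥ xv = e1
  have hBx : B *ᵥ xv = e1 := by
    funext i
    have hiN : (i : ℕ) < N := i.isLt
    rcases Nat.eq_zero_or_pos (i : ℕ) with hi0 | hip
    · have : (B *ᵥ xv) i = B i i * xv i := by
        apply Finset.sum_eq_single_of_mem i (Finset.mem_univ i)
        intro j _ hji
        have h1 : (i : ℕ) ≠ (j : ℕ) := fun e => hji (Fin.ext e.symm)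
        have h2 : (i : ℕ) ≠ (j : ℕ) + 1 := by omega
        show B i j * xv j = 0
        rw [hBzero i j h1 h2, zero_mul]
      rw [this, hBdiag, he1, if_pos hi0, hxv]
      simp only [hi0]
      unfold infX
      simp [hd0]
    · obtain ⟨m, hm⟩ : ∃ m, (i : ℕ) = m + 1 := ⟨(i : ℕ) - 1, by omega⟩
      have hmN : m < N := by omega
      set j0 : Fin N := ⟨m, hmN⟩ with hj0
      have hij0 : i ≠ j0 := by
        intro e
        have : (i : ℕ) = m := by rw [e]
        omega
      have : (B *ᵥ xv) i = B i i * xv i + B i j0 * xv j0 := by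
        apply Finset.sum_eq_add_of_mem i j0 (Finset.mem_univ _) (Finset.mem_univ _) hij0
        intro j _ hj
        have h1 : (i : ℕ) ≠ (j : ℕ) := fun e => hj.1 (Fin.ext e.symm)
        have h2 : (i : ℕ) ≠ (j : ℕ) + 1 := by
          intro e
          have hjm : (j : ℕ) = (j0 : ℕ) := by simp only [hj0]; omega
          exact hj.2 (Fin.ext hjm)
        show B i j * xv j = 0
        rw [hBzero i j h1 h2, zero_mul]
      rw [this, hBdiag, hBsub i j0 (by simpa [hj0] using hm), he1, if_neg (by omega)]
      have hxj0 : xv j0 = infX N lc lr m := by simp [hxv, hj0]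
      have hxi : xv i = infX N lc lr (m + 1) := by simp [hxv, hm]
      rw [hxj0, hxi, hm]
      have := infX_rec hlc hlr (show m + 2 ≤ N by omega)
      linarith
  -- invertibility of B
  have htri : B.BlockTriangular OrderDual.toDual := by
    intro i j hij
    have hlt : i < j := hij
    exact hBzero i j (by omega) (by omega)
  have hdet : B.det = ∏ i : Fin N, B i i := Matrix.det_of_lowerTriangular B htri
  have hdetne : B.det ≠ 0 := by
    rw [hdet]
    apply Finset.prod_ne_zero_iff.mpr
    intro i _
    rw [hBdiag]
    exact (infD_pos hlc hlr i.isLt).ne'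
  have hinv : B⁻¹ * B = 1 := Matrix.nonsing_inv_mul B (Ne.isUnit hdetne)
  have hsolve : B⁻¹ *ᵥ e1 = xv := by
    rw [← hBx, Matrix.mulVec_mulVec, hinv, Matrix.one_mulVec]
  rw [hsolve]
  -- entries of A
  have hAdiag : ∀ i : Fin N, A i i = -infC N lc ((i : ℕ) + 1) := by
    intro i; rw [hA i i, if_pos rfl]; unfold infC; push_cast; ring
  have hAsub : ∀ i j : Fin N, (i : ℕ) = (j : ℕ) + 1 → A i j = infC N lc (i : ℕ) := by
    intro i j hij
    rw [hA i j, if_neg (by omega), if_pos hij, hij]; unfold infC; push_cast; ring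
  have hAzero : ∀ i j : Fin N, (i : ℕ) ≠ (j : ℕ) → (i : ℕ) ≠ (j : ℕ) + 1 → A i j = 0 := by
    intro i j h1 h2; rw [hA i j, if_neg h1, if_neg h2]
  have hc0 : infC N lc 0 = 0 := by unfold infC; push_cast; ring
  -- compute A *ᵥ xv
  have hAx : ∀ i : Fin N, (A *ᵥ xv) i
      = infC N lc (i : ℕ) * infX N lc lr ((i : ℕ) - 1)
        - infC N lc ((i : ℕ) + 1) * infX N lc lr (i : ℕ) := by
    intro i
    rcases Nat.eq_zero_or_pos (i : ℕ) with hi0 | hip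
    · have h1 : (A *ᵥ xv) i = A i i * xv i := by
        apply Finset.sum_eq_single_of_mem i (Finset.mem_univ i)
        intro j _ hji
        show A i j * xv j = 0
        rw [hAzero i j (fun e => hji (Fin.ext e.symm)) (by omega), zero_mul]
      have hxi : xv i = infX N lc lr (i : ℕ) := rfl
      rw [h1, hAdiag, hxi, hi0, hc0]
      ring
    · obtain ⟨m, hm⟩ : ∃ m, (i : ℕ) = m + 1 := ⟨(i : ℕ) - 1, by omega⟩
      have hmN : m < N := by have := i.isLt; omega
      set j0 : Fin N := ⟨m, hmN⟩ with hj0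
      have hij0 : i ≠ j0 := by
        intro e
        have : (i : ℕ) = m := by rw [e]
        omega
      have h1 : (A *ᵥ xv) i = A i i * xv i + A i j0 * xv j0 := by
        apply Finset.sum_eq_add_of_mem i j0 (Finset.mem_univ _) (Finset.mem_univ _) hij0
        intro j _ hj
        have ha : (i : ℕ) ≠ (j : ℕ) := fun e => hj.1 (Fin.ext e.symm)
        have hb : (i : ℕ) ≠ (j : ℕ) + 1 := by
          intro e
          have hjm : (j : ℕ) = (j0 : ℕ) := by simp only [hj0]; omega
          exact hj.2 (Fin.ext hjm)
        show A i j * xv j = 0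
        rw [hAzero i j ha hb, zero_mul]
      have hxj0 : xv j0 = infX N lc lr m := by simp [hxv, hj0]
      have hxi : xv i = infX N lc lr (m + 1) := by simp [hxv, hm]
      rw [h1, hAdiag, hAsub i j0 (by simpa [hj0] using hm), hxj0, hxi, hm]
      have hs : m + 1 - 1 = m := by omega
      rw [hs]
      ring
  -- dot product as a sum over range N
  have hdot : w ⬝ᵥ (A *ᵥ xv) = ∑ i ∈ Finset.range N,
      ((i : ℝ) / ((N : ℝ) - 1)) *
        (infC N lc i * infX N lc lr (i - 1) - infC N lc (i + 1) * infX N lc lr i) := by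
    have h0 : w ⬝ᵥ (A *ᵥ xv) = ∑ i : Fin N, w i * (A *ᵥ xv) i := rfl
    rw [h0, ← Fin.sum_univ_eq_sum_range (fun i => ((i : ℝ) / ((N : ℝ) - 1)) *
      (infC N lc i * infX N lc lr (i - 1) - infC N lc (i + 1) * infX N lc lr i)) N]
    refine Finset.sum_congr rfl fun i _ => ?_
    rw [hw i, hAx i]
  have hkey := infKey (N := N) hlc hlr (N - 1) (by omega)
  have hN1 : N - 1 + 1 = N := by omega
  rw [hN1] at hkey
  have hsplit : ∑ i ∈ Finset.range N, ((i : ℝ) / ((N : ℝ) - 1)) *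
        (infC N lc i * infX N lc lr (i - 1) - infC N lc (i + 1) * infX N lc lr i)
      = 1 / ((N : ℝ) - 1) * ∑ i ∈ Finset.range N,
        (i : ℝ) * (infC N lc i * infX N lc lr (i - 1) - infC N lc (i + 1) * infX N lc lr i) := by
    rw [Finset.mul_sum]
    exact Finset.sum_congr rfl fun i _ => by ring
  rw [hdot, hsplit, hkey]
  -- now handle the right-hand side
  have hterm : ∀ k ∈ Finset.Icc 2 N,
      ((k : ℝ) - 1) / ((N : ℝ) - 1) * ∏ j ∈ Finset.Icc 1 (k - 1),
        ((j : ℝ) * ((N : ℝ) - (j : ℝ)) * (lc / lr)) /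
          (2 + ((j : ℝ) + 1) * ((N : ℝ) - (j : ℝ) - 1) * (lc / lr))
      = ((k : ℝ) - 1) / ((N : ℝ) - 1) * (infX N lc lr (k - 1) * infD N lc lr 0) := by
    intro k _
    congr 1
    have hprod : ∀ j ∈ Finset.Icc 1 (k - 1),
        ((j : ℝ) * ((N : ℝ) - (j : ℝ)) * (lc / lr)) /
          (2 + ((j : ℝ) + 1) * ((N : ℝ) - (j : ℝ) - 1) * (lc / lr))
        = infC N lc j / infD N lc lr j := by
      intro j _
      have hdiv : lr * (lc / lr) = lc := by field_simp
      rw [show infC N lc j = lr * ((j : ℝ) * ((N : ℝ) - (j : ℝ)) * (lc / lr)) from by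
            unfold infC; linear_combination (-((j : ℝ) * ((N : ℝ) - (j : ℝ)))) * hdiv,
          show infD N lc lr j
              = lr * (2 + ((j : ℝ) + 1) * ((N : ℝ) - (j : ℝ) - 1) * (lc / lr)) from by
            unfold infD infC; push_cast
            linear_combination (-(((j : ℝ) + 1) * ((N : ℝ) - (j : ℝ) - 1))) * hdiv,
          mul_div_mul_left _ _ hlr.ne']
    rw [Finset.prod_congr rfl hprod]
    unfold infX
    exact (div_mul_cancel₀ _ hd0).symm
  have hd0' : infD N lc lr 0 = 2 * lr + ((N : ℝ) - 1) * lc := by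
    unfold infD infC; push_cast; ring
  have hNcast : (1 : ℝ) ≤ (N : ℝ) := by exact_mod_cast (by omega : 1 ≤ N)
  have hpre : 1 / (1 + ((N : ℝ) - 1) * lc / (2 * lr)) = 2 * lr / infD N lc lr 0 := by
    have hd0pos : (0:ℝ) < infD N lc lr 0 := infD_pos hlc hlr (by omega)
    rw [hd0']
    rw [hd0'] at hd0pos
    field_simp
  rw [hh, Finset.sum_congr rfl hterm, hpre]
  have hmain : 2 * lr / infD N lc lr 0 * ∑ k ∈ Finset.Icc 2 N,
        (((k : ℝ) - 1) / ((N : ℝ) - 1) * (infX N lc lr (k - 1) * infD N lc lr 0))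
      = 1 / ((N : ℝ) - 1) * (2 * lr * ∑ i ∈ Finset.range N, (i : ℝ) * infX N lc lr i) := by
    have h1 : ∑ k ∈ Finset.Icc 2 N,
          (((k : ℝ) - 1) / ((N : ℝ) - 1) * (infX N lc lr (k - 1) * infD N lc lr 0))
        = ∑ m ∈ Finset.Icc 1 (N - 1),
          ((m : ℝ) / ((N : ℝ) - 1) * (infX N lc lr m * infD N lc lr 0)) := by
      apply Finset.sum_nbij' (fun k => k - 1) (fun m => m + 1)
      · intro a ha; simp only [Finset.mem_Icc] at ha ⊢; omega
      · intro a ha; simp only [Finset.mem_Icc] at ha ⊢; omega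
      · intro a ha; simp only [Finset.mem_Icc] at ha; omega
      · intro a ha; simp only [Finset.mem_Icc] at ha; omega
      · intro a ha
        simp only [Finset.mem_Icc] at ha
        have hcast : ((a : ℝ) - 1) = (((a - 1 : ℕ)) : ℝ) := by
          rw [Nat.cast_sub (by omega : 1 ≤ a)]; push_cast; ring
        rw [hcast]
    have h2 : ∑ m ∈ Finset.Icc 1 (N - 1),
          ((m : ℝ) / ((N : ℝ) - 1) * (infX N lc lr m * infD N lc lr 0))
        = ∑ m ∈ Finset.range N,
          ((m : ℝ) / ((N : ℝ) - 1) * (infX N lc lr m * infD N lc lr 0)) := by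
      rw [Nat.range_eq_Icc_zero_sub_one N (by omega),
        show Finset.Icc 0 (N - 1) = insert 0 (Finset.Icc 1 (N - 1)) from by
          ext a; simp; omega,
        Finset.sum_insert (by simp)]
      simp
    rw [h1, h2, Finset.mul_sum, Finset.mul_sum, Finset.mul_sum]
    have hNne : ((N : ℝ) - 1) ≠ 0 := by
      have : (2 : ℝ) ≤ (N : ℝ) := by exact_mod_cast hN
      linarith
    refine Finset.sum_congr rfl fun i _ => ?_
    field_simp [hd0, hNne]
  exact hmain.symm
end

section
/- There holds wᵀ A (2λ_r I − A)^{−1} e_1 = (2λ_r / (2λ_r + (N−1)λ_c)) · Σ_{k=1}^{N} ( (k−1)/(N−1) · ∏_{j=1}^{k−1} a_j ), where a_j = j(N−j)λ_c / (2λ_r + (j+1)(N−j−1)λ_c) for j = 1,…,N−1. -/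
open Matrix Finset

/-! The matrix `2λ_r I - A` is lower bidiagonal, so forward substitution solves
`(2λ_r I - A) x = e₁` explicitly: `x_k = (∏_{j=1}^{k-1} a_j) / (2λ_r + (N-1)λ_c)`, the `a_j` being
exactly minus the ratios of consecutive subdiagonal and diagonal entries. Writing
`A = 2λ_r I - (2λ_r I - A)` gives `A x = 2λ_r x - e₁`, and `w₁ = 0` kills the `e₁` term, so
`wᵀ A x = 2λ_r wᵀ x`, which is the right-hand side after shifting the summation index. -/

namespace Matrix

variable {R : Type*}

def lowerBidiagonal [Zero R] (N : ℕ) (d s : ℕ → R) : Matrix (Fin N) (Fin N) R :=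
  of fun i j => if (i : ℕ) = j then d i else if (i : ℕ) = j + 1 then s j else 0

theorem lowerBidiagonal_isLowerTriangular [Zero R] {N : ℕ} (d s : ℕ → R) :
    (lowerBidiagonal N d s).IsLowerTriangular := by
  intro i j hij
  have hij : (i : ℕ) < j := hij
  simp only [lowerBidiagonal, of_apply]
  rw [if_neg (by omega), if_neg (by omega)]

theorem det_lowerBidiagonal [CommRing R] (N : ℕ) (d s : ℕ → R) :
    (lowerBidiagonal N d s).det = ∏ i : Fin N, d i := by
  rw [det_of_isLowerTriangular _ (lowerBidiagonal_isLowerTriangular d s)]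
  simp [lowerBidiagonal]

theorem isUnit_det_lowerBidiagonal [Field R] {N : ℕ} {d : ℕ → R} (s : ℕ → R)
    (hd : ∀ n, n < N → d n ≠ 0) : IsUnit (lowerBidiagonal N d s).det := by
  rw [det_lowerBidiagonal]
  exact (prod_ne_zero_iff.mpr fun (i : Fin N) _ => hd i i.isLt).isUnit

theorem smul_one_sub_lowerBidiagonal [Ring R] (N : ℕ) (r : R) (d s : ℕ → R) :
    r • 1 - lowerBidiagonal N d s = lowerBidiagonal N (fun n => r - d n) (fun n => -s n) := by
  ext i j
  by_cases hij : i = j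
  · subst hij
    simp [lowerBidiagonal]
  · have hij' : (i : ℕ) ≠ j := Fin.val_ne_of_ne hij
    simp only [lowerBidiagonal, sub_apply, smul_apply, one_apply_ne hij, of_apply, if_neg hij',
      smul_zero, zero_sub]
    split_ifs <;> simp

section Semiring

variable [NonUnitalNonAssocSemiring R] {N : ℕ} (d s : ℕ → R) (v : Fin N → R)

theorem lowerBidiagonal_mulVec_zero (h : 0 < N) :
    (lowerBidiagonal N d s *ᵥ v) ⟨0, h⟩ = d 0 * v ⟨0, h⟩ := by
  rw [mulVec, dotProduct, Fintype.sum_eq_single ⟨0, h⟩ fun j hj => ?_]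
  · simp [lowerBidiagonal]
  have hj : (j : ℕ) ≠ 0 := fun h => hj (Fin.ext h)
  simp [lowerBidiagonal, hj.symm]

theorem lowerBidiagonal_mulVec_succ {m : ℕ} (h : m + 1 < N) :
    (lowerBidiagonal N d s *ᵥ v) ⟨m + 1, h⟩
      = s m * v ⟨m, by omega⟩ + d (m + 1) * v ⟨m + 1, h⟩ := by
  rw [mulVec, dotProduct, Fintype.sum_eq_add ⟨m, by omega⟩ ⟨m + 1, h⟩ (by simp [Fin.ext_iff])
    fun j hj => ?_]
  · simp [lowerBidiagonal]
  have hj₁ : (j : ℕ) ≠ m := fun h => hj.1 (Fin.ext h)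
  have hj₂ : (j : ℕ) ≠ m + 1 := fun h => hj.2 (Fin.ext h)
  simp [lowerBidiagonal, hj₁.symm, hj₂.symm]

end Semiring

theorem mulVec_inv_smul_one_sub_mulVec [CommRing R] {n : Type*} [Fintype n] [DecidableEq n]
    (A : Matrix n n R) (r : R) (h : IsUnit (r • 1 - A).det) (b : n → R) :
    A *ᵥ ((r • 1 - A)⁻¹ *ᵥ b) = r • ((r • 1 - A)⁻¹ *ᵥ b) - b := by
  calc A *ᵥ ((r • 1 - A)⁻¹ *ᵥ b) = (r • 1 - (r • 1 - A)) *ᵥ ((r • 1 - A)⁻¹ *ᵥ b) := by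
        rw [sub_sub_cancel]
    _ = r • ((r • 1 - A)⁻¹ *ᵥ b) - b := by
        rw [sub_mulVec, smul_mulVec, one_mulVec, mulVec_mulVec, mul_nonsing_inv _ h, one_mulVec]

section Field

variable {K : Type*} [Field K] {N : ℕ} {d s a : ℕ → K}

theorem lowerBidiagonal_mulVec_prod (hd : d 0 ≠ 0)
    (ha : ∀ n, n + 1 < N → d (n + 1) * a (n + 1) = -s n) :
    lowerBidiagonal N d s *ᵥ (fun i : Fin N => (∏ j ∈ Icc 1 (i : ℕ), a j) / d 0)
      = fun i : Fin N => if (i : ℕ) = 0 then 1 else 0 := by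
  funext ⟨i, hi⟩
  cases i with
  | zero => simp [lowerBidiagonal_mulVec_zero, hd]
  | succ m =>
    rw [lowerBidiagonal_mulVec_succ _ _ _ hi, prod_Icc_succ_top (by omega), if_neg m.succ_ne_zero]
    linear_combination (∏ j ∈ Icc 1 m, a j) / d 0 * ha m hi

theorem lowerBidiagonal_inv_mulVec (hd : ∀ n, n < N → d n ≠ 0)
    (ha : ∀ n, n + 1 < N → d (n + 1) * a (n + 1) = -s n) :
    (lowerBidiagonal N d s)⁻¹ *ᵥ (fun i : Fin N => if (i : ℕ) = 0 then 1 else 0)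
      = fun i : Fin N => (∏ j ∈ Icc 1 (i : ℕ), a j) / d 0 := by
  rcases N.eq_zero_or_pos with rfl | hN
  · exact Subsingleton.elim _ _
  have := invertibleOfIsUnitDet _ (isUnit_det_lowerBidiagonal s hd)
  exact inv_mulVec_eq_vec (lowerBidiagonal_mulVec_prod (hd 0 hN) ha).symm

end Field

end Matrix

theorem infection_bound_intermediate_general (N : ℕ) (lc lr : ℝ)
    (hlc : 0 < lc) (hlr : 0 < lr)
    (A : Matrix (Fin N) (Fin N) ℝ)
    (hA : ∀ i j : Fin N, A i j =
      if (i : ℕ) = (j : ℕ) then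
        -((((i : ℕ) : ℝ) + 1) * ((N : ℝ) - (((i : ℕ) : ℝ) + 1)) * lc)
      else if (i : ℕ) = (j : ℕ) + 1 then
        (((j : ℕ) : ℝ) + 1) * ((N : ℝ) - (((j : ℕ) : ℝ) + 1)) * lc
      else 0)
    (w : Fin N → ℝ) (hw : ∀ k : Fin N, w k = ((k : ℕ) : ℝ) / ((N : ℝ) - 1))
    (e1 : Fin N → ℝ) (he1 : ∀ j : Fin N, e1 j = if (j : ℕ) = 0 then 1 else 0)
    (a : ℕ → ℝ)
    (ha : ∀ j : ℕ, a j =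
      (j : ℝ) * ((N : ℝ) - (j : ℝ)) * lc /
        (2 * lr + ((j : ℝ) + 1) * ((N : ℝ) - (j : ℝ) - 1) * lc)) :
    w ⬝ᵥ (A *ᵥ ((((2 * lr) • (1 : Matrix (Fin N) (Fin N) ℝ) - A)⁻¹) *ᵥ e1))
      = (2 * lr / (2 * lr + ((N : ℝ) - 1) * lc)) *
          ∑ k ∈ Finset.Icc 1 N,
            (((k : ℝ) - 1) / ((N : ℝ) - 1) * ∏ j ∈ Finset.Icc 1 (k - 1), a j) := by
  set c : ℕ → ℝ := fun n => ((n : ℝ) + 1) * ((N : ℝ) - ((n : ℝ) + 1)) * lc with hc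
  have hdiag : ∀ n, n < N → 2 * lr + c n ≠ 0 := fun n hn => by
    have hnN : (n : ℝ) + 1 ≤ N := by exact_mod_cast hn
    have hcn : 0 ≤ c n := mul_nonneg (mul_nonneg (by positivity) (by linarith)) hlc.le
    linarith
  have hrec : ∀ n, n + 1 < N → (2 * lr + c (n + 1)) * a (n + 1) = -(-c n) := fun n hn => by
    have hden : 2 * lr + (((n + 1 : ℕ) : ℝ) + 1) * ((N : ℝ) - ((n + 1 : ℕ) : ℝ) - 1) * lc
        = 2 * lr + c (n + 1) := by
      simp only [hc]; push_cast; ring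
    rw [ha, hden, mul_div_cancel₀ _ (hdiag _ hn)]
    simp only [hc]; push_cast; ring
  have hM : (2 * lr) • 1 - A = lowerBidiagonal N (fun n => 2 * lr + c n) (fun n => -c n) := by
    have : A = lowerBidiagonal N (fun n => -c n) c := by ext i j; rw [hA]; rfl
    simp only [this, smul_one_sub_lowerBidiagonal, sub_neg_eq_add]
  have hdet : IsUnit ((2 * lr) • 1 - A).det := hM ▸ isUnit_det_lowerBidiagonal _ hdiag
  have hw_e1 : w ⬝ᵥ e1 = 0 := sum_eq_zero fun j _ => by
    rw [hw, he1]; split_ifs with hj <;> simp [hj]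
  obtain rfl : e1 = fun j : Fin N => if (j : ℕ) = 0 then 1 else 0 := funext he1
  rw [mulVec_inv_smul_one_sub_mulVec A _ hdet, dotProduct_sub, hw_e1, sub_zero, dotProduct_smul,
    hM, lowerBidiagonal_inv_mulVec hdiag hrec]
  have hc0 : 2 * lr + c 0 = 2 * lr + ((N : ℝ) - 1) * lc := by simp only [hc]; ring
  simp only [dotProduct, hw]
  rw [Fin.sum_univ_eq_sum_range
      (fun i => (i : ℝ) / (N - 1) * ((∏ j ∈ Icc 1 i, a j) / (2 * lr + c 0))),
    ← Ico_add_one_right_eq_Icc, sum_Ico_eq_sum_range, Nat.add_sub_cancel, smul_eq_mul,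
    mul_sum, mul_sum]
  refine sum_congr rfl fun k _ => ?_
  rw [Nat.add_sub_cancel_left, hc0]
  push_cast
  ring

/-- Intermediate identity in the appendix proof of Corollary 1:
`wᵀ A (2λ_r I - A)⁻¹ e₁ = (2λ_r/(2λ_r + (N-1)λ_c)) · Σ_{k=1}^{N} ((k-1)/(N-1) ∏_{j=1}^{k-1} a_j)`
with `a_j = j(N-j)λ_c / (2λ_r + (j+1)(N-j-1)λ_c)`. -/
theorem infection_bound_intermediate (N : ℕ) (hN : 2 ≤ N) (lc lr : ℝ)
    (hlc : 0 < lc) (hlr : 0 < lr)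
    (A : Matrix (Fin N) (Fin N) ℝ)
    (hA : ∀ i j : Fin N, A i j =
      if (i : ℕ) = (j : ℕ) then
        -((((i : ℕ) : ℝ) + 1) * ((N : ℝ) - (((i : ℕ) : ℝ) + 1)) * lc)
      else if (i : ℕ) = (j : ℕ) + 1 then
        (((j : ℕ) : ℝ) + 1) * ((N : ℝ) - (((j : ℕ) : ℝ) + 1)) * lc
      else 0)
    (w : Fin N → ℝ) (hw : ∀ k : Fin N, w k = ((k : ℕ) : ℝ) / ((N : ℝ) - 1))
    (e1 : Fin N → ℝ) (he1 : ∀ j : Fin N, e1 j = if (j : ℕ) = 0 then 1 else 0)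
    (a : ℕ → ℝ)
    (ha : ∀ j : ℕ, a j =
      (j : ℝ) * ((N : ℝ) - (j : ℝ)) * lc /
        (2 * lr + ((j : ℝ) + 1) * ((N : ℝ) - (j : ℝ) - 1) * lc)) :
    w ⬝ᵥ (A *ᵥ ((((2 * lr) • (1 : Matrix (Fin N) (Fin N) ℝ) - A)⁻¹) *ᵥ e1))
      = (2 * lr / (2 * lr + ((N : ℝ) - 1) * lc)) *
          ∑ k ∈ Finset.Icc 1 N,
            (((k : ℝ) - 1) / ((N : ℝ) - 1) * ∏ j ∈ Finset.Icc 1 (k - 1), a j) :=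
  infection_bound_intermediate_general N lc lr hlc hlr A hA w hw e1 he1 a ha
end

section
/- For every s ≥ 0, wᵀ e^{As} e_1 ≤ 1 − e^{−(N−1)λ_c s}. -/
/-!
Let `u = 1 - w`. The columns of `A` sum to zero, so `1ᵀ e^{sA} = 1ᵀ`, and a column computation
gives `uᵀ A ≥ -(N-1)λ_c uᵀ` entrywise. Since `A` is nonnegative off the diagonal, this comparison
survives exponentiation: `uᵀ e^{sA} ≥ e^{-(N-1)λ_c s} uᵀ`, as one sees from the power series of
`e^{s(A + cI)}` with `c` so large that `A + cI ≥ 0`. Pairing with `e₁ ≥ 0` and `u₁ = 1` gives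
`wᵀ e^{sA} e₁ = 1 - uᵀ e^{sA} e₁ ≤ 1 - e^{-(N-1)λ_c s}`.
-/

open Matrix
open scoped Nat

namespace Matrix

variable {n : Type*} [Fintype n]

theorem vecMul_mono_of_nonneg {B : Matrix n n ℝ} (hB : ∀ i j, 0 ≤ B i j) {u v : n → ℝ}
    (huv : u ≤ v) : u ᵥ* B ≤ v ᵥ* B := fun j =>
  Finset.sum_le_sum fun i _ => mul_le_mul_of_nonneg_right (huv i) (hB i j)

variable [DecidableEq n]

open scoped Norms.Operator in
theorem hasSum_vecMul_exp (M : Matrix n n ℝ) (v : n → ℝ) :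
    HasSum (fun k : ℕ => (k !⁻¹ : ℝ) • (v ᵥ* M ^ k)) (v ᵥ* NormedSpace.exp M) := by
  have hL : Continuous (vecMulBilin ℝ ℝ v : Matrix n n ℝ →ₗ[ℝ] n → ℝ) :=
    LinearMap.continuous_of_finiteDimensional _
  have h := (NormedSpace.exp_series_hasSum_exp' (𝕂 := ℝ) M).map (vecMulBilin ℝ ℝ v) hL
  simp only [Function.comp_def, map_smul, vecMulBilin_apply] at h
  exact h

open scoped Norms.Operator in
theorem exp_add_smul_one (M : Matrix n n ℝ) (c : ℝ) :
    NormedSpace.exp (M + c • 1) = Real.exp c • NormedSpace.exp M := by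
  have hc : NormedSpace.exp (c • 1 : Matrix n n ℝ) = algebraMap ℝ _ (Real.exp c) := by
    rw [Algebra.smul_def, mul_one, Real.exp_eq_exp_ℝ]
    exact (NormedSpace.algebraMap_exp_comm c).symm
  rw [exp_add_of_commute _ _ ((Commute.one_right M).smul_right c), hc, ← Algebra.commutes,
    ← Algebra.smul_def]

theorem vecMul_exp_of_vecMul_eq_zero {M : Matrix n n ℝ} {v : n → ℝ} (h : v ᵥ* M = 0) :
    v ᵥ* NormedSpace.exp M = v := by
  refine (hasSum_vecMul_exp M v).unique ?_
  convert hasSum_ite_eq 0 v with k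
  rcases k with _ | k
  · simp
  · simp [pow_succ', ← vecMul_vecMul, h]

theorem pow_smul_le_vecMul_pow {B : Matrix n n ℝ} (hB : ∀ i j, 0 ≤ B i j) {v : n → ℝ} {α : ℝ}
    (hα : 0 ≤ α) (h : α • v ≤ v ᵥ* B) (k : ℕ) : α ^ k • v ≤ v ᵥ* B ^ k := by
  induction k with
  | zero => simp
  | succ k ih =>
    calc α ^ (k + 1) • v = α ^ k • (α • v) := by rw [pow_succ, mul_smul]
      _ ≤ α ^ k • (v ᵥ* B) := smul_le_smul_of_nonneg_left h (pow_nonneg hα k)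
      _ = (α ^ k • v) ᵥ* B := by rw [smul_vecMul]
      _ ≤ (v ᵥ* B ^ k) ᵥ* B := vecMul_mono_of_nonneg hB ih
      _ = v ᵥ* B ^ (k + 1) := by rw [vecMul_vecMul, pow_succ]

theorem exp_smul_le_vecMul_exp_of_nonneg {B : Matrix n n ℝ} (hB : ∀ i j, 0 ≤ B i j)
    {v : n → ℝ} {α : ℝ} (hα : 0 ≤ α) (h : α • v ≤ v ᵥ* B) :
    Real.exp α • v ≤ v ᵥ* NormedSpace.exp B := by
  have hexp : HasSum (fun k : ℕ => (k !⁻¹ : ℝ) • (α ^ k • v)) (Real.exp α • v) := by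
    simpa [Real.exp_eq_exp_ℝ, smul_smul] using
      (NormedSpace.exp_series_hasSum_exp' (𝕂 := ℝ) α).smul_const v
  exact hasSum_le (fun k => smul_le_smul_of_nonneg_left (pow_smul_le_vecMul_pow hB hα h k)
    (by positivity)) hexp (hasSum_vecMul_exp B v)

theorem exp_smul_le_vecMul_exp_of_metzler {A : Matrix n n ℝ} (hA : ∀ i j, i ≠ j → 0 ≤ A i j)
    {v : n → ℝ} {β : ℝ} (h : β • v ≤ v ᵥ* A) :
    Real.exp β • v ≤ v ᵥ* NormedSpace.exp A := by
  set c := |β| + ∑ i, |A i i|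
  have hdiag (i : n) : |A i i| ≤ c :=
    le_add_of_nonneg_of_le (abs_nonneg β)
      (Finset.single_le_sum (fun k _ => abs_nonneg (A k k)) (Finset.mem_univ i))
  have hB (i j : n) : 0 ≤ (A + c • 1) i j := by
    rcases eq_or_ne i j with rfl | hij
    · simp only [add_apply, smul_apply, one_apply_eq, smul_eq_mul, mul_one]
      linarith [neg_abs_le (A i i), hdiag i]
    · simpa [one_apply_ne hij] using hA i j hij
  have hα : 0 ≤ β + c := by
    linarith [neg_abs_le β, Finset.sum_nonneg fun i (_ : i ∈ Finset.univ) => abs_nonneg (A i i)]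
  have hshift : (β + c) • v ≤ v ᵥ* (A + c • 1) := by
    rw [vecMul_add, vecMul_smul, vecMul_one, add_smul]
    exact add_le_add_left h _
  have key := exp_smul_le_vecMul_exp_of_nonneg hB hα hshift
  rw [exp_add_smul_one, vecMul_smul, Real.exp_add, mul_comm, mul_smul] at key
  exact le_of_smul_le_smul_left key (Real.exp_pos c)

theorem exp_mul_smul_le_vecMul_exp_smul_of_metzler {A : Matrix n n ℝ}
    (hA : ∀ i j, i ≠ j → 0 ≤ A i j) {v : n → ℝ} {β : ℝ} (h : β • v ≤ v ᵥ* A) {s : ℝ}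
    (hs : 0 ≤ s) : Real.exp (β * s) • v ≤ v ᵥ* NormedSpace.exp (s • A) := by
  have hsA (i j : n) (hij : i ≠ j) : 0 ≤ (s • A) i j := mul_nonneg hs (hA i j hij)
  refine exp_smul_le_vecMul_exp_of_metzler hsA ?_
  rw [vecMul_smul, mul_comm, mul_smul]
  exact smul_le_smul_of_nonneg_left h hs

/-- Column convention: the entry `(i, j)` is the rate of the jump `j → i`, and `a k` is the
rate of `k → k + 1`. -/
def pureBirthGenerator (N : ℕ) (a : ℕ → ℝ) : Matrix (Fin N) (Fin N) ℝ :=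
  of fun i j => if (i : ℕ) = j then -a i else if (i : ℕ) = j + 1 then a j else 0

theorem pureBirthGenerator_nonneg_of_ne {N : ℕ} {a : ℕ → ℝ} (ha : ∀ k, k + 1 < N → 0 ≤ a k)
    {i j : Fin N} (hij : i ≠ j) : 0 ≤ pureBirthGenerator N a i j := by
  simp only [pureBirthGenerator, of_apply, Fin.val_eq_val, hij, if_false]
  split_ifs with h
  exacts [ha j (h ▸ i.isLt), le_rfl]

theorem vecMul_pureBirthGenerator {N : ℕ} {a : ℕ → ℝ} (ha : a (N - 1) = 0) (u : ℕ → ℝ)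
    (j : Fin N) :
    ((fun i : Fin N => u i) ᵥ* pureBirthGenerator N a) j = a j * (u (j + 1) - u j) := by
  have hsplit (i : ℕ) : (if i = j then -a i else if i = j + 1 then a j else 0) =
      (if i = j then -a i else 0) + (if i = j + 1 then a j else 0) := by
    split_ifs <;> first | omega | ring
  simp only [vecMul, dotProduct, pureBirthGenerator, of_apply]
  rw [Fin.sum_univ_eq_sum_range
    (fun i => u i * if i = j then -a i else if i = j + 1 then a j else 0) N]
  simp only [hsplit, mul_add, mul_ite, mul_zero, Finset.sum_add_distrib, Finset.sum_ite_eq',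
    Finset.mem_range, j.isLt, if_true]
  split_ifs with hj
  · ring
  · rw [show (j : ℕ) = N - 1 by omega, ha]
    ring

theorem one_vecMul_pureBirthGenerator {N : ℕ} {a : ℕ → ℝ} (ha : a (N - 1) = 0) :
    (fun _ => 1) ᵥ* pureBirthGenerator N a = 0 := by
  ext j
  simpa using vecMul_pureBirthGenerator ha (fun _ => 1) j

theorem neg_smul_le_vecMul_pureBirthGenerator {N : ℕ} (hN : 1 < N) {a : ℕ → ℝ}
    (ha : a (N - 1) = 0) {μ : ℝ} (hμ : ∀ k < N, a k ≤ μ * (N - 1 - k)) :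
    (-μ) • (fun k : Fin N => 1 - (k : ℝ) / (N - 1)) ≤
      (fun k : Fin N => 1 - (k : ℝ) / (N - 1)) ᵥ* pureBirthGenerator N a := by
  intro j
  have hN : 0 < (N : ℝ) - 1 := by
    rw [sub_pos]
    exact_mod_cast hN
  rw [vecMul_pureBirthGenerator ha (fun k => 1 - (k : ℝ) / (N - 1)) j, Pi.smul_apply,
    smul_eq_mul]
  push_cast
  have key : a j / (N - 1) ≤ μ * (1 - j / (N - 1)) := by
    rw [div_le_iff₀ hN, mul_assoc, sub_mul, one_mul, div_mul_cancel₀ _ hN.ne']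
    exact hμ j j.isLt
  field_simp at key ⊢
  linarith

end Matrix

/-- The paper's rate `i(N-i)λ_c` out of the state with `i` infected nodes, indexed by
`k = i - 1`. -/
def infectionRate (N : ℕ) (lc : ℝ) (k : ℕ) : ℝ :=
  ((k : ℝ) + 1) * ((N : ℝ) - ((k : ℝ) + 1)) * lc

theorem infectionRate_nonneg {N : ℕ} {lc : ℝ} (hlc : 0 ≤ lc) {k : ℕ} (hk : k + 1 ≤ N) :
    0 ≤ infectionRate N lc k := by
  have hk : (k : ℝ) + 1 ≤ N := by exact_mod_cast hk
  unfold infectionRate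
  exact mul_nonneg (mul_nonneg (by positivity) (by linarith)) hlc

theorem infectionRate_sub_one_eq_zero {N : ℕ} (hN : 1 ≤ N) (lc : ℝ) :
    infectionRate N lc (N - 1) = 0 := by
  simp [infectionRate, Nat.cast_sub hN]

theorem infectionRate_le {N : ℕ} {lc : ℝ} (hlc : 0 ≤ lc) {k : ℕ} (hk : k < N) :
    infectionRate N lc k ≤ ((N : ℝ) - 1) * lc * (N - 1 - k) := by
  have hrate : infectionRate N lc k = (k + 1) * ((N - 1 - k) * lc) := by
    unfold infectionRate
    ring
  calc infectionRate N lc k ≤ (N - 1) * ((N - 1 - k) * lc) := by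
        rw [hrate]
        rcases Nat.lt_or_ge (k + 1) N with hk' | hk'
        · have hk' : (k : ℝ) + 1 + 1 ≤ N := by exact_mod_cast hk'
          exact mul_le_mul_of_nonneg_right (by linarith) (mul_nonneg (by linarith) hlc)
        · have hk' : (k : ℝ) + 1 = N := by exact_mod_cast le_antisymm hk hk'
          simp [← hk']
    _ = ((N : ℝ) - 1) * lc * (N - 1 - k) := by ring

/-- Pointwise domination of the Infection-model cdf by the Ping-model cdf:
for all `s ≥ 0`, `wᵀ e^{As} e₁ ≤ 1 - e^{-(N-1)λ_c s}`. -/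
theorem infection_cdf_le_ping_cdf (N : ℕ) (hN : 2 ≤ N) (lc : ℝ) (hlc : 0 < lc)
    (A : Matrix (Fin N) (Fin N) ℝ)
    (hA : ∀ i j : Fin N, A i j =
      if (i : ℕ) = (j : ℕ) then
        -((((i : ℕ) : ℝ) + 1) * ((N : ℝ) - (((i : ℕ) : ℝ) + 1)) * lc)
      else if (i : ℕ) = (j : ℕ) + 1 then
        (((j : ℕ) : ℝ) + 1) * ((N : ℝ) - (((j : ℕ) : ℝ) + 1)) * lc
      else 0)
    (w : Fin N → ℝ) (hw : ∀ k : Fin N, w k = ((k : ℕ) : ℝ) / ((N : ℝ) - 1))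
    (e1 : Fin N → ℝ) (he1 : ∀ j : Fin N, e1 j = if (j : ℕ) = 0 then 1 else 0) :
    ∀ s : ℝ, 0 ≤ s →
      w ⬝ᵥ (NormedSpace.exp (s • A) *ᵥ e1)
        ≤ 1 - Real.exp (-(((N : ℝ) - 1) * lc) * s) := by
  intro s hs
  set E := NormedSpace.exp (s • A)
  set u : Fin N → ℝ := fun k => 1 - (k : ℝ) / (N - 1)
  have hA : A = pureBirthGenerator N (infectionRate N lc) := ext hA
  have hlast := infectionRate_sub_one_eq_zero (by omega : 1 ≤ N) lc
  have hmetzler (i j : Fin N) (hij : i ≠ j) : 0 ≤ A i j :=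
    hA ▸ pureBirthGenerator_nonneg_of_ne (fun _ hk => infectionRate_nonneg hlc.le hk.le) hij
  have hmass : (fun _ => 1) ᵥ* E = fun _ => 1 := vecMul_exp_of_vecMul_eq_zero <| by
    rw [vecMul_smul, hA, one_vecMul_pureBirthGenerator hlast, smul_zero]
  have hdecay : Real.exp (-((N - 1) * lc) * s) • u ≤ u ᵥ* E :=
    exp_mul_smul_le_vecMul_exp_smul_of_metzler hmetzler (hA ▸
      neg_smul_le_vecMul_pureBirthGenerator (by omega) hlast fun _ hk =>
        infectionRate_le hlc.le hk) hs
  have he1 : e1 = Pi.single ⟨0, by omega⟩ 1 := by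
    ext j
    simp [he1, Pi.single_apply, Fin.ext_iff]
  have hw : w = (fun _ => 1) - u := by
    ext k
    simp [u, hw]
  calc w ⬝ᵥ (E *ᵥ e1) = (fun _ => 1) ⬝ᵥ e1 - (u ᵥ* E) ⬝ᵥ e1 := by
        rw [dotProduct_mulVec, hw, sub_vecMul, hmass, sub_dotProduct]
    _ ≤ (fun _ => 1) ⬝ᵥ e1 - (Real.exp (-((N - 1) * lc) * s) • u) ⬝ᵥ e1 := by
        gcongr
        exact dotProduct_le_dotProduct_of_nonneg_right hdecay
          (he1 ▸ Pi.single_nonneg.2 zero_le_one)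
    _ = 1 - Real.exp (-((N - 1) * lc) * s) := by simp [he1, u]
end
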